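/- Suppose U ξ = −ξ and U ∘ U = identity. Set x₀ = ((1 − a)/‖ξ‖²)·ξ and x₁ = ((−1 − a)/‖ξ‖²)·ξ. Then T(x₀, 1) = (x₀, 1) and T(x₁, 1) = −(x₁, 1) (so the eigenvalues of T on ⟨ξ⟩ ⊕ ℂ are 1 and −1), and ‖x₀‖ = (a − 1)/‖ξ‖ < 1; in particular T(x₀,1) = (x₀,1) with ‖x₀‖ < 1, so the induced isometry of the Hilbert ball fixes the point x₀ of the open unit ball (it is elliptic). -/
import Mathlib


open scoped InnerProductSpace

noncomputable section

variable {H : Type*} [NormedAddCommGroup H] [InnerProductSpace ℂ H]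

/-- The vector `(x, z)` of the Hilbert space direct sum `H ⊕ ℂ`. -/
def mkE (x : H) (z : ℂ) : WithLp 2 (H × ℂ) := (WithLp.equiv 2 (H × ℂ)).symm (x, z)

/-- With `ξ ≠ 0`, `a = √(1 + ‖ξ‖²)`, `A x = x + ((a−1)/‖ξ‖²)·⟨x,ξ⟩·ξ`, `U` unitary with
`U ξ = −ξ` and `U ∘ U = 1`, and `T(x,z) = (U(A x) + z·U ξ, ⟨x,ξ⟩ + a·z)`: with
`x₀ = ((1−a)/‖ξ‖²)·ξ` and `x₁ = ((−1−a)/‖ξ‖²)·ξ` one has `T(x₀,1) = (x₀,1)`,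
`T(x₁,1) = −(x₁,1)`, and `‖x₀‖ = (a−1)/‖ξ‖ < 1`; so the induced isometry of the Hilbert ball
fixes the point `x₀` of the open unit ball (it is elliptic).
(The paper's inner product `⟨x,y⟩` is linear in the first slot, i.e. `⟪y,x⟫_ℂ` in Mathlib's
convention.) -/
theorem stmt16 [CompleteSpace H]
    (ξ : H) (hξ : ξ ≠ 0) (a : ℝ) (ha : a = Real.sqrt (1 + ‖ξ‖ ^ 2))
    (A : H →L[ℂ] H)
    (hA : ∀ x : H, A x = x + ((((a - 1) / ‖ξ‖ ^ 2 : ℝ) : ℂ) * ⟪ξ, x⟫_ℂ) • ξ)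
    (U : H →L[ℂ] H) (hU : U ∈ unitary (H →L[ℂ] H))
    (hUξ : U ξ = -ξ) (hU2 : U ∘L U = 1)
    (T : WithLp 2 (H × ℂ) →L[ℂ] WithLp 2 (H × ℂ))
    (hT : ∀ (x : H) (z : ℂ),
      T (mkE x z) = mkE (U (A x) + z • U ξ) (⟪ξ, x⟫_ℂ + (a : ℂ) * z))
    (x₀ x₁ : H)
    (hx₀ : x₀ = (((1 - a) / ‖ξ‖ ^ 2 : ℝ) : ℂ) • ξ)
    (hx₁ : x₁ = (((-1 - a) / ‖ξ‖ ^ 2 : ℝ) : ℂ) • ξ) :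
    T (mkE x₀ 1) = mkE x₀ 1 ∧ T (mkE x₁ 1) = -(mkE x₁ 1) ∧
      ‖x₀‖ = (a - 1) / ‖ξ‖ ∧ (a - 1) / ‖ξ‖ < 1 := by
  have hn : (0:ℝ) < ‖ξ‖ := norm_pos_iff.mpr hξ
  have ha2 : a^2 = 1 + ‖ξ‖^2 := by
    rw [ha]; exact Real.sq_sqrt (by positivity)
  have ha1 : 1 ≤ a := by
    nlinarith [Real.sqrt_nonneg (1 + ‖ξ‖^2), ha2]
  have hc2 : ((a:ℂ))^2 = 1 + (‖ξ‖:ℂ)^2 := by exact_mod_cast ha2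
  have hcn : (‖ξ‖:ℂ) ≠ 0 := by exact_mod_cast hn.ne'
  have hself : ⟪ξ, ξ⟫_ℂ = (‖ξ‖:ℂ)^2 := by
    rw [inner_self_eq_norm_sq_to_K]
    norm_cast
  have hin₀ : ⟪ξ, x₀⟫_ℂ = 1 - (a:ℂ) := by
    rw [hx₀, inner_smul_right, hself]
    push_cast
    field_simp
  have hin₁ : ⟪ξ, x₁⟫_ℂ = -1 - (a:ℂ) := by
    rw [hx₁, inner_smul_right, hself]
    push_cast
    field_simp
  have hmkE : ∀ (x y : H) (z w : ℂ), x = y → z = w → mkE x z = mkE y w := by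
    intro x y z w h1 h2; rw [h1, h2]
  have hneg : ∀ (x : H) (z : ℂ), -(mkE x z) = mkE (-x) (-z) := by
    intro x z; rfl
  refine ⟨?_, ?_, ?_, ?_⟩
  · rw [hT, hin₀]
    refine hmkE _ _ _ _ ?_ (by ring)
    rw [hA, hin₀, hx₀, map_add, map_smul, map_smul, hUξ, one_smul]
    match_scalars
    field_simp
    linear_combination ((a:ℂ)*(‖ξ‖:ℂ)^2 - (‖ξ‖:ℂ)^2 + 1 + (‖ξ‖:ℂ)^2 - (a:ℂ)*(‖ξ‖:ℂ)^2) * hc2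
  · rw [hT, hin₁, hneg]
    refine hmkE _ _ _ _ ?_ (by ring)
    rw [hA, hin₁, hx₁, map_add, map_smul, map_smul, hUξ, one_smul]
    match_scalars
    field_simp
    linear_combination ((1+(a:ℂ))*(‖ξ‖:ℂ)^2 + 1 - (‖ξ‖:ℂ)^2 - (a:ℂ)*(‖ξ‖:ℂ)^2) * hc2
  · rw [hx₀, norm_smul]
    rw [Complex.norm_real, Real.norm_eq_abs, abs_div, abs_of_nonpos (by linarith), abs_of_nonneg (by positivity)]
    rw [show -(1-a) = a - 1 by ring]
    field_simp
  · rw [div_lt_one hn]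
    nlinarith

end
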